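/- arXiv:1308.4105 — 3 statements merged into one kernel-verified Lean document; each statement's English description precedes it below -/
import Mathlib

section
/- Let R be a local ring and s a central element in J(R). Every strongly nil clean element of the formal matrix ring M₂(R;s) is strongly J-clean. -/
/-- The formal matrix ring `M₂(R;s)`: 2×2 matrices over `R` recorded by their four
entries, with the twisted multiplication
`[[a,b],[c,d]]·[[a',b'],[c',d']] = [[aa'+s²bc', ab'+bd'],[ca'+dc', s²cb'+dd']]`. -/
@[ext]
structure FM (R : Type*) (s : R) : Type _ where
  a : R
  b : R
  c : R
  d : R

namespace FM

variable {R : Type*} [Ring R] {s : R}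

instance : Zero (FM R s) := ⟨⟨0, 0, 0, 0⟩⟩
instance : One (FM R s) := ⟨⟨1, 0, 0, 1⟩⟩
instance : Add (FM R s) := ⟨fun x y => ⟨x.a + y.a, x.b + y.b, x.c + y.c, x.d + y.d⟩⟩
instance : Neg (FM R s) := ⟨fun x => ⟨-x.a, -x.b, -x.c, -x.d⟩⟩
instance : Mul (FM R s) :=
  ⟨fun x y => ⟨x.a * y.a + s * s * (x.b * y.c), x.a * y.b + x.b * y.d,
    x.c * y.a + x.d * y.c, s * s * (x.c * y.b) + x.d * y.d⟩⟩

@[simp] lemma zero_a : (0 : FM R s).a = 0 := rfl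
@[simp] lemma zero_b : (0 : FM R s).b = 0 := rfl
@[simp] lemma zero_c : (0 : FM R s).c = 0 := rfl
@[simp] lemma zero_d : (0 : FM R s).d = 0 := rfl
@[simp] lemma one_a : (1 : FM R s).a = 1 := rfl
@[simp] lemma one_b : (1 : FM R s).b = 0 := rfl
@[simp] lemma one_c : (1 : FM R s).c = 0 := rfl
@[simp] lemma one_d : (1 : FM R s).d = 1 := rfl
@[simp] lemma add_a (x y : FM R s) : (x + y).a = x.a + y.a := rfl
@[simp] lemma add_b (x y : FM R s) : (x + y).b = x.b + y.b := rfl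
@[simp] lemma add_c (x y : FM R s) : (x + y).c = x.c + y.c := rfl
@[simp] lemma add_d (x y : FM R s) : (x + y).d = x.d + y.d := rfl
@[simp] lemma neg_a (x : FM R s) : (-x).a = -x.a := rfl
@[simp] lemma neg_b (x : FM R s) : (-x).b = -x.b := rfl
@[simp] lemma neg_c (x : FM R s) : (-x).c = -x.c := rfl
@[simp] lemma neg_d (x : FM R s) : (-x).d = -x.d := rfl
@[simp] lemma mul_a (x y : FM R s) : (x * y).a = x.a * y.a + s * s * (x.b * y.c) := rfl
@[simp] lemma mul_b (x y : FM R s) : (x * y).b = x.a * y.b + x.b * y.d := rfl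
@[simp] lemma mul_c (x y : FM R s) : (x * y).c = x.c * y.a + x.d * y.c := rfl
@[simp] lemma mul_d (x y : FM R s) : (x * y).d = s * s * (x.c * y.b) + x.d * y.d := rfl

instance : AddCommGroup (FM R s) where
  add_assoc x y z := by ext <;> simp [add_assoc]
  zero_add x := by ext <;> simp
  add_zero x := by ext <;> simp
  add_comm x y := by ext <;> simp [add_comm]
  neg_add_cancel x := by ext <;> simp
  nsmul := nsmulRec
  zsmul := zsmulRec

/-- When `s` is central in `R`, `M₂(R;s)` is a ring. -/
instance [hs : Fact (∀ x : R, s * x = x * s)] : Ring (FM R s) where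
  __ := (inferInstance : AddCommGroup (FM R s))
  mul := (· * ·)
  one := 1
  mul_assoc x y z := by
    have hc : ∀ u v : R, u * (s * v) = s * (u * v) := fun u v => by
      rw [← mul_assoc, ← hs.out u, mul_assoc]
    ext <;> simp only [mul_a, mul_b, mul_c, mul_d, mul_add, add_mul, mul_assoc, hc] <;> abel
  one_mul x := by ext <;> simp
  mul_one x := by ext <;> simp
  left_distrib x y z := by ext <;> simp [mul_add, add_mul] <;> abel
  right_distrib x y z := by ext <;> simp [mul_add, add_mul] <;> abel
  zero_mul x := by ext <;> simp
  mul_zero x := by ext <;> simp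

/-- In a commutative ring every element is central. -/
instance (priority := 100) {R : Type*} [CommRing R] (s : R) : Fact (∀ x : R, s * x = x * s) :=
  ⟨fun x => mul_comm s x⟩

end FM

/-- An element is strongly J-clean if it is the sum of an idempotent and an element of
the Jacobson radical which commute. -/
def IsStronglyJClean {A : Type*} [Ring A] (x : A) : Prop :=
  ∃ e : A, IsIdempotentElem e ∧ x * e = e * x ∧ x - e ∈ (⊥ : Ideal A).jacobson

/-- An element is strongly clean if it is the sum of an idempotent and a unit
which commute. -/
def IsStronglyClean {A : Type*} [Ring A] (x : A) : Prop :=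
  ∃ e : A, IsIdempotentElem e ∧ x * e = e * x ∧ IsUnit (x - e)

/-- An element is strongly nil clean if it is the sum of an idempotent and a nilpotent
which commute. -/
def IsStronglyNilClean {A : Type*} [Ring A] (x : A) : Prop :=
  ∃ e : A, IsIdempotentElem e ∧ x * e = e * x ∧ IsNilpotent (x - e)

/-!
Write `A = e + n` with `e` idempotent, `n` nilpotent and `e n = n e`; we show `n ∈ J(M₂(R;s))`.
Because `s ∈ J(R)`, taking the diagonal entries modulo `J(R)` is a ring homomorphism
`M₂(R;s) → R/J(R) × R/J(R)`, so the diagonal entries of `n` are nilpotent modulo `J(R)`;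
as `R` is local, `J(R)` is the set of nonunits, so they lie in `J(R)`. On the other hand,
a formal matrix with unit diagonal is a unit by an `LDU` factorisation whose Schur complement
differs from a unit by an element of `s² R ⊆ J(R)`. Hence `1 + y n` is a unit for every `y`,
i.e. `n ∈ J(M₂(R;s))`.
-/

section Jacobson

variable {R : Type*} [Ring R]

theorem Ideal.mem_jacobson_bot_of_forall_isUnit_mul_add_one {x : R}
    (h : ∀ y : R, IsUnit (y * x + 1)) : x ∈ (⊥ : Ideal R).jacobson := by
  refine Ideal.mem_jacobson_iff.2 fun y => ⟨((h y).unit⁻¹ : Rˣ), ?_⟩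
  rw [Submodule.mem_bot, mul_assoc, ← mul_add_one, IsUnit.val_inv_mul, sub_self]

theorem Ideal.isUnit_one_add_of_mem_jacobson_bot {x : R} (hx : x ∈ (⊥ : Ideal R).jacobson) :
    IsUnit (1 + x) := by
  have left_inv : ∀ w ∈ (⊥ : Ideal R).jacobson, ∃ z, z * (1 + w) = 1 := fun w hw => by
    obtain ⟨z, hz⟩ := Ideal.mem_jacobson_iff.1 hw 1
    rw [Submodule.mem_bot, sub_eq_zero] at hz
    exact ⟨z, (by noncomm_ring : z * (1 + w) = z * 1 * w + z).trans hz⟩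
  obtain ⟨z, hz⟩ := left_inv x hx
  -- `z = 1 - z x` again lies in `1 + J`, so it has a left inverse `w`,
  -- and then `w = w z (1 + x) = 1 + x`.
  have hz' : z = 1 + -(z * x) := by rw [← hz]; noncomm_ring
  obtain ⟨w, hw⟩ := left_inv _ (neg_mem (Ideal.mul_mem_left _ z hx))
  rw [← hz'] at hw
  have hwx : w = 1 + x := by
    calc w = w * (z * (1 + x)) := by rw [hz, mul_one]
      _ = 1 + x := by rw [← mul_assoc, hw, one_mul]
  exact ⟨⟨1 + x, z, hwx ▸ hw, hz⟩, rfl⟩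

theorem IsUnit.add_of_mem_jacobson_bot {u x : R} (hu : IsUnit u)
    (hx : x ∈ (⊥ : Ideal R).jacobson) : IsUnit (u + x) := by
  have hfactor : u + x = u * (1 + ↑hu.unit⁻¹ * x) := by
    rw [mul_one_add, ← mul_assoc, hu.mul_val_inv, one_mul]
  rw [hfactor]
  exact hu.mul (Ideal.isUnit_one_add_of_mem_jacobson_bot (Ideal.mul_mem_left _ _ hx))

theorem Ideal.not_isUnit_of_mem_jacobson_bot [Nontrivial R] {x : R}
    (hx : x ∈ (⊥ : Ideal R).jacobson) : ¬IsUnit x := fun hu =>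
  bot_ne_top (Ideal.jacobson_eq_top_iff.1 (Ideal.eq_top_of_isUnit_mem _ hx hu))

end Jacobson

namespace IsLocalRing

variable {R : Type*} [Ring R] [IsLocalRing R]

instance toIsDedekindFiniteMonoid : IsDedekindFiniteMonoid R where
  mul_eq_one_symm {a b} hab := by
    have hidem : IsIdempotentElem (b * a) := by
      rw [IsIdempotentElem, mul_assoc, ← mul_assoc a, hab, one_mul]
    rcases isUnit_or_isUnit_of_add_one (add_sub_cancel (b * a) 1) with h | h
    · exact (IsIdempotentElem.iff_eq_one_of_isUnit h).1 hidem
    · have hb : (1 - b * a) * b = 0 := by rw [sub_mul, one_mul, mul_assoc, hab, mul_one, sub_self]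
      rw [h.mul_right_eq_zero.1 hb, mul_zero] at hab
      exact absurd hab zero_ne_one

theorem mem_jacobson_bot_of_not_isUnit {x : R} (hx : ¬IsUnit x) :
    x ∈ (⊥ : Ideal R).jacobson := by
  refine Ideal.mem_jacobson_bot_of_forall_isUnit_mul_add_one fun y => ?_
  have hyx : -(y * x) ∈ nonunits R := by simp [mem_nonunits_iff, hx]
  by_contra h
  have h1 := nonunits_add h hyx
  rw [add_neg_cancel_comm] at h1
  exact h1 isUnit_one

theorem mem_jacobson_bot_of_isNilpotent_mk {x : R}
    (hx : IsNilpotent (Ideal.Quotient.mk (⊥ : Ideal R).jacobson x)) :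
    x ∈ (⊥ : Ideal R).jacobson := by
  obtain ⟨k, hk⟩ := hx
  rw [← map_pow, Ideal.Quotient.eq_zero_iff_mem] at hk
  exact mem_jacobson_bot_of_not_isUnit fun hu => Ideal.not_isUnit_of_mem_jacobson_bot hk (hu.pow k)

end IsLocalRing

namespace FM

variable {R : Type*} [Ring R] {s : R}

theorem sq_mul_mem {I : Ideal R} [I.IsTwoSided] (hs : s ∈ I) (t : R) : s * s * t ∈ I :=
  I.mul_mem_right t (I.mul_mem_left s hs)

variable [Fact (∀ x : R, s * x = x * s)]

/-- The diagonal entries modulo `I`; multiplicative because `s ∈ I` kills the twisted terms. -/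
def diagQuot (I : Ideal R) [I.IsTwoSided] (hs : s ∈ I) : FM R s →+* (R ⧸ I) × (R ⧸ I) where
  toFun M := (Ideal.Quotient.mk I M.a, Ideal.Quotient.mk I M.d)
  map_one' := by simp
  map_zero' := by simp
  map_add' M N := by simp
  map_mul' M N := by
    have hs0 : Ideal.Quotient.mk I s = 0 := Ideal.Quotient.eq_zero_iff_mem.2 hs
    ext <;> simp [hs0]

theorem isUnit_lower (l : R) : IsUnit (⟨1, 0, l, 1⟩ : FM R s) :=
  ⟨⟨⟨1, 0, l, 1⟩, ⟨1, 0, -l, 1⟩, by ext <;> simp, by ext <;> simp⟩, rfl⟩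

theorem isUnit_upper (u : R) : IsUnit (⟨1, u, 0, 1⟩ : FM R s) :=
  ⟨⟨⟨1, u, 0, 1⟩, ⟨1, -u, 0, 1⟩, by ext <;> simp, by ext <;> simp⟩, rfl⟩

theorem isUnit_diag {p q : R} (hp : IsUnit p) (hq : IsUnit q) : IsUnit (⟨p, 0, 0, q⟩ : FM R s) :=
  ⟨⟨⟨p, 0, 0, q⟩, ⟨↑hp.unit⁻¹, 0, 0, ↑hq.unit⁻¹⟩, by ext <;> simp, by ext <;> simp⟩, rfl⟩

/-- The `LDU` factorisation `M = [[1,0],[c a⁻¹,1]] · diag(a, d - s² c a⁻¹ b) · [[1,a⁻¹ b],[0,1]]`,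
whose middle entry is a unit because `s ∈ J(R)`. -/
theorem isUnit_of_isUnit_a_of_isUnit_d (hs : s ∈ (⊥ : Ideal R).jacobson) {M : FM R s}
    (ha : IsUnit M.a) (hd : IsUnit M.d) : IsUnit M := by
  set α := ha.unit
  have hα : (α : R) = M.a := ha.unit_spec
  have hschur : IsUnit (M.d - s * s * (M.c * ↑α⁻¹ * M.b)) := by
    rw [sub_eq_add_neg]
    exact hd.add_of_mem_jacobson_bot (neg_mem (sq_mul_mem hs _))
  have hLDU : M = (⟨1, 0, M.c * ↑α⁻¹, 1⟩ : FM R s) *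
      ⟨M.a, 0, 0, M.d - s * s * (M.c * ↑α⁻¹ * M.b)⟩ * ⟨1, ↑α⁻¹ * M.b, 0, 1⟩ := by
    ext <;> simp [← hα, mul_assoc]
  rw [hLDU]
  exact ((isUnit_lower _).mul (isUnit_diag ha hschur)).mul (isUnit_upper _)

theorem mem_jacobson_bot_of_a_mem_of_d_mem (hs : s ∈ (⊥ : Ideal R).jacobson) {M : FM R s}
    (ha : M.a ∈ (⊥ : Ideal R).jacobson) (hd : M.d ∈ (⊥ : Ideal R).jacobson) :
    M ∈ (⊥ : Ideal (FM R s)).jacobson := by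
  refine Ideal.mem_jacobson_bot_of_forall_isUnit_mul_add_one fun y => ?_
  refine isUnit_of_isUnit_a_of_isUnit_d hs ?_ ?_
  · rw [add_a, one_a, add_comm]
    exact isUnit_one.add_of_mem_jacobson_bot (add_mem (Ideal.mul_mem_left _ _ ha) (sq_mul_mem hs _))
  · rw [add_d, one_d, add_comm]
    exact isUnit_one.add_of_mem_jacobson_bot (add_mem (sq_mul_mem hs _) (Ideal.mul_mem_left _ _ hd))

end FM

theorem stmt9 {R : Type*} [Ring R] [IsLocalRing R] (s : R)
    [Fact (∀ x : R, s * x = x * s)] (hsJ : s ∈ (⊥ : Ideal R).jacobson)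
    (A : FM R s) (h : IsStronglyNilClean A) : IsStronglyJClean A := by
  obtain ⟨e, he, hcomm, hnil⟩ := h
  have hdiag := hnil.map (FM.diagQuot _ hsJ)
  have ha := IsLocalRing.mem_jacobson_bot_of_isNilpotent_mk (hdiag.map (RingHom.fst _ _))
  have hd := IsLocalRing.mem_jacobson_bot_of_isNilpotent_mk (hdiag.map (RingHom.snd _ _))
  exact ⟨e, he, hcomm, FM.mem_jacobson_bot_of_a_mem_of_d_mem hsJ ha hd⟩
end

section
/- Let R be a local ring with central unit s. Every non-trivial idempotent E of the formal matrix ring M₂(R;s) is similar (conjugate by a unit of M₂(R;s)) to the diagonal matrix [[1,0],[0,0]]. -/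
/-!
Write `E = [[a, b], [c, d]]`. If `a` is a unit, conjugating by the unit `[[a, 0], [c, 1]]`
brings `E` to `[[1, β], [0, δ]]`; idempotence forces `δ² = δ` and `βδ = 0`, so `δ = 0`
(as `E ≠ 1`), and the unit `[[1, β], [0, 1]]` removes `β`. If `d` is a unit, conjugation by
`[[0, 1], [1, 0]]`, invertible because `s` is, swaps `a` and `d`. If neither is a unit, `1 - d`
is, and idempotence gives `a = a z a` for some `z`; then `a z` is a non-invertible idempotent
of the local ring `R`, so `a = 0`, and in turn `b = c = d = 0`.
-/

section Conj

variable {M : Type*} [Monoid M]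

theorem IsConj.isIdempotentElem {a b : M} (h : IsConj a b) (ha : IsIdempotentElem a) :
    IsIdempotentElem b := by
  obtain ⟨c, hc⟩ := h
  have hbb : b * b * c = b * c := by
    rw [mul_assoc, ← hc.eq, ← mul_assoc, ← hc.eq, mul_assoc, ha.eq]
  exact (Units.mul_left_inj c).mp hbb

theorem IsConj.exists_units_inv_mul_mul_eq {a b : M} (h : IsConj a b) :
    ∃ u : Mˣ, ((u⁻¹ : Mˣ) : M) * a * u = b := by
  obtain ⟨c, hc⟩ := h
  exact ⟨c⁻¹, by rw [inv_inv, hc.eq, mul_assoc, Units.mul_inv, mul_one]⟩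

theorem isConj_of_isUnit_of_mul_eq {a b c : M} (hc : IsUnit c) (h : c * a = b * c) :
    IsConj a b :=
  ⟨hc.unit, h⟩

end Conj

namespace IsLocalRing

variable {R : Type*} [Ring R] [IsLocalRing R]

theorem eq_zero_or_eq_one_of_isIdempotentElem {e : R} (he : IsIdempotentElem e) :
    e = 0 ∨ e = 1 := by
  rcases isUnit_or_isUnit_of_add_one (add_sub_cancel e 1) with h | h
  · exact Or.inr (h.mul_left_cancel (by rw [he.eq, mul_one]))
  · exact Or.inl (h.mul_right_cancel (by rw [zero_mul, mul_sub, mul_one, he.eq, sub_self]))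

instance isDedekindFiniteMonoid : IsDedekindFiniteMonoid R where
  mul_eq_one_symm {x y} h := by
    have hyx : IsIdempotentElem (y * x) := by
      rw [IsIdempotentElem, mul_assoc, ← mul_assoc x, h, one_mul]
    refine (eq_zero_or_eq_one_of_isIdempotentElem hyx).resolve_left fun h0 => ?_
    refine one_ne_zero (α := R) ?_
    calc (1 : R) = x * y * (x * y) := by rw [h, one_mul]
      _ = x * (y * x) * y := by simp only [mul_assoc]
      _ = 0 := by rw [h0, mul_zero, zero_mul]

theorem eq_zero_of_eq_mul_mul_self {a z : R} (ha : ¬IsUnit a) (h : a = a * z * a) : a = 0 := by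
  have haz : IsIdempotentElem (a * z) := by
    rw [IsIdempotentElem, ← mul_assoc, ← h]
  rcases eq_zero_or_eq_one_of_isIdempotentElem haz with h0 | h1
  · rw [h, h0, zero_mul]
  · exact absurd (isUnit_of_mul_isUnit_left (h1 ▸ isUnit_one)) ha

end IsLocalRing

namespace FM

variable {R : Type*} [Ring R] {s : R} [Fact (∀ x : R, s * x = x * s)]

theorem isUnit_mk_lower {a : R} (ha : IsUnit a) (c : R) : IsUnit (mk a 0 c 1 : FM R s) := by
  obtain ⟨u, rfl⟩ := ha
  refine isUnit_iff_exists.mpr ⟨mk ↑u⁻¹ 0 (-(c * ↑u⁻¹)) 1, ?_, ?_⟩ <;> ext <;>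
    simp [mul_assoc]

theorem isUnit_mk_upper (b : R) : IsUnit (mk 1 b 0 1 : FM R s) :=
  isUnit_iff_exists.mpr ⟨mk 1 (-b) 0 1, by ext <;> simp, by ext <;> simp⟩

theorem isUnit_mk_swap (hs : IsUnit s) : IsUnit (mk 0 1 1 0 : FM R s) := by
  obtain ⟨u, rfl⟩ := hs
  refine isUnit_iff_exists.mpr ⟨mk 0 ↑(u * u)⁻¹ ↑(u * u)⁻¹ 0, ?_, ?_⟩ <;> ext <;>
    simp [← Units.val_mul]

theorem isConj_swap (hs : IsUnit s) (E : FM R s) : IsConj E (mk E.d E.c E.b E.a) :=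
  isConj_of_isUnit_of_mul_eq (isUnit_mk_swap hs) (by ext <;> simp)

theorem exists_isConj_mk_one_zero_of_isUnit_a {E : FM R s} (hE : IsIdempotentElem E)
    (ha : IsUnit E.a) : ∃ β δ : R, IsConj E (mk 1 β 0 δ) := by
  obtain ⟨a, b, c, d⟩ := E
  obtain ⟨u, rfl⟩ := ha
  have e1 : ↑u * ↑u + s * s * b * c = (u : R) := by simpa [mul_assoc] using congrArg FM.a hE
  have e3 : c * ↑u + d * c = c := congrArg FM.c hE
  refine ⟨↑u⁻¹ * b, d - s * s * (c * (↑u⁻¹ * b)), (isConj_of_isUnit_of_mul_eq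
    (isUnit_mk_lower u.isUnit c) ?_).symm⟩
  ext <;> simp [e1, e3, ← mul_assoc]

theorem isConj_mk_one_zero_zero_zero_of_mk_one_zero [IsLocalRing R] {β δ : R}
    (hF : IsIdempotentElem (mk 1 β 0 δ : FM R s)) (hF1 : (mk 1 β 0 δ : FM R s) ≠ 1) :
    IsConj (mk 1 β 0 δ : FM R s) (mk 1 0 0 0) := by
  have hβδ : β * δ = 0 := by simpa using congrArg FM.b hF
  have hδ : δ * δ = δ := by simpa using congrArg FM.d hF
  rcases IsLocalRing.eq_zero_or_eq_one_of_isIdempotentElem hδ with rfl | rfl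
  · exact isConj_of_isUnit_of_mul_eq (isUnit_mk_upper β) (by ext <;> simp)
  · rw [mul_one] at hβδ
    exact absurd (by ext <;> simp [hβδ]) hF1

theorem isConj_mk_one_zero_zero_zero_of_isUnit_a [IsLocalRing R] {E : FM R s}
    (hE : IsIdempotentElem E) (hE1 : E ≠ 1) (ha : IsUnit E.a) :
    IsConj E (mk 1 0 0 0) := by
  obtain ⟨β, δ, hc⟩ := exists_isConj_mk_one_zero_of_isUnit_a hE ha
  exact hc.trans (isConj_mk_one_zero_zero_zero_of_mk_one_zero (hc.isIdempotentElem hE)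
    fun h => hE1 (isConj_one_left.mp (h ▸ hc)))

theorem eq_zero_of_not_isUnit_a_of_not_isUnit_d [IsLocalRing R] {E : FM R s}
    (hE : IsIdempotentElem E) (ha : ¬IsUnit E.a) (hd : ¬IsUnit E.d) : E = 0 := by
  obtain ⟨a, b, c, d⟩ := E
  have e1 : a * a + s * s * (b * c) = a := congrArg FM.a hE
  have e2 : a * b + b * d = b := congrArg FM.b hE
  have e3 : c * a + d * c = c := congrArg FM.c hE
  have e4 : s * s * (c * b) + d * d = d := congrArg FM.d hE
  obtain ⟨q, hq⟩ : IsUnit (1 - d) :=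
    (IsLocalRing.isUnit_or_isUnit_of_add_one (add_sub_cancel d 1)).resolve_left hd
  have hbd : b * (1 - d) = a * b := by rw [mul_sub, mul_one, eq_sub_of_add_eq e2]
  have hdc : (1 - d) * c = c * a := by rw [sub_mul, one_mul, eq_sub_of_add_eq e3]
  have hb : b = a * (b * ↑q⁻¹) := by
    calc b = b * ↑q * ↑q⁻¹ := by rw [Units.mul_inv_cancel_right]
      _ = a * (b * ↑q⁻¹) := by rw [hq, hbd, mul_assoc]
  have hc : c = ↑q⁻¹ * c * a := by
    calc c = ↑q⁻¹ * (↑q * c) := by rw [Units.inv_mul_cancel_left]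
      _ = ↑q⁻¹ * c * a := by rw [hq, hdc, mul_assoc]
  have hsa : Commute s a := (Fact.out : ∀ x : R, s * x = x * s) a
  have ha0 : a = 0 := by
    refine IsLocalRing.eq_zero_of_eq_mul_mul_self ha
      (z := 1 + s * s * (b * ↑q⁻¹ * (↑q⁻¹ * c))) ?_
    calc a = a * a + s * s * (b * c) := e1.symm
      _ = a * a + s * s * (a * (b * ↑q⁻¹) * (↑q⁻¹ * c * a)) := by rw [← hb, ← hc]
      _ = _ := by
        simp only [mul_add, add_mul, mul_one, mul_assoc]
        rw [hsa.left_comm, hsa.left_comm]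
  subst ha0
  have hb0 : b = 0 := by rw [hb, zero_mul]
  have hc0 : c = 0 := by rw [hc, mul_zero]
  subst hb0 hc0
  have hd0 : d = 0 :=
    IsLocalRing.eq_zero_of_eq_mul_mul_self hd (z := 1) (by simpa using e4.symm)
  ext <;> simp [hd0]

end FM

theorem stmt10 {R : Type*} [Ring R] [IsLocalRing R] (s : R)
    [Fact (∀ x : R, s * x = x * s)] (hs : IsUnit s)
    (E : FM R s) (hE : IsIdempotentElem E) (h0 : E ≠ 0) (h1 : E ≠ 1) :
    ∃ u : (FM R s)ˣ, ((u⁻¹ : (FM R s)ˣ) : FM R s) * E * (u : FM R s) = FM.mk 1 0 0 0 := by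
  refine IsConj.exists_units_inv_mul_mul_eq ?_
  by_cases ha : IsUnit E.a
  · exact FM.isConj_mk_one_zero_zero_zero_of_isUnit_a hE h1 ha
  by_cases hd : IsUnit E.d
  · have hswap := FM.isConj_swap hs E
    exact hswap.trans (FM.isConj_mk_one_zero_zero_zero_of_isUnit_a (hswap.isIdempotentElem hE)
      (fun h => h1 (isConj_one_left.mp (h ▸ hswap))) hd)
  · exact absurd (FM.eq_zero_of_not_isUnit_a_of_not_isUnit_d hE ha hd) h0
end

section
/- Let R be a commutative ring with s ∈ R and let A ∈ M₂(R;s) with A ∉ J(M₂(R;s)). If det_s(A) ∈ J(R) and tr(A) ∈ J(R), then A is not strongly J-clean in M₂(R;s). -/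
/-- The `s`-determinant of a formal matrix. -/
def FM.dets {R : Type*} [CommRing R] {s : R} (A : FM R s) : R :=
  A.a * A.d - s * s * (A.b * A.c)


/-!
By Cayley–Hamilton, `A² = tr(A)·A - det_s(A)·I`, so `A²` lies in the Jacobson radical `J` of
`M₂(R;s)` as soon as `tr(A)` and `det_s(A)` lie in `J(R)`. If `A = E + W` with `E` idempotent and
`W ∈ J`, then `E = E² ≡ A² ≡ 0` modulo `J`; but the only idempotent in a Jacobson radical is `0`,
so `A = W ∈ J`.
-/

section Jacobson

variable {A : Type*} [Ring A] {e x : A}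

theorem IsIdempotentElem.eq_zero_of_mem_jacobson_bot (he : IsIdempotentElem e)
    (hJ : e ∈ (⊥ : Ideal A).jacobson) : e = 0 := by
  obtain ⟨z, hz⟩ := Ideal.mem_jacobson_iff.1 hJ (-1)
  have hz : z * (1 - e) = 1 := by
    rw [Ideal.mem_bot] at hz
    linear_combination (norm := noncomm_ring) hz
  calc e = z * (1 - e) * e := by rw [hz, one_mul]
    _ = z * (e - e * e) := by noncomm_ring
    _ = 0 := by rw [he.eq, sub_self, mul_zero]

theorem IsIdempotentElem.mem_jacobson_bot_of_sub_mem (he : IsIdempotentElem e)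
    (hxe : x - e ∈ (⊥ : Ideal A).jacobson) (hx : x * x ∈ (⊥ : Ideal A).jacobson) :
    x ∈ (⊥ : Ideal A).jacobson := by
  set J := (⊥ : Ideal A).jacobson
  have heJ : e ∈ J := by
    have hsq : e = x * x - (x - e) * x - e * (x - e) := by
      conv_lhs => rw [← he.eq]
      noncomm_ring
    rw [hsq]
    exact J.sub_mem (J.sub_mem hx (J.mul_mem_right x hxe)) (J.mul_mem_left e hxe)
  simpa [he.eq_zero_of_mem_jacobson_bot heJ] using hxe

end Jacobson

namespace FM

variable {R : Type*} [CommRing R] {s : R}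

@[simp] lemma sub_a (x y : FM R s) : (x - y).a = x.a - y.a := by
  simp [sub_eq_add_neg]
@[simp] lemma sub_b (x y : FM R s) : (x - y).b = x.b - y.b := by
  simp [sub_eq_add_neg]
@[simp] lemma sub_c (x y : FM R s) : (x - y).c = x.c - y.c := by
  simp [sub_eq_add_neg]
@[simp] lemma sub_d (x y : FM R s) : (x - y).d = x.d - y.d := by
  simp [sub_eq_add_neg]

def scalar (t : R) : FM R s := ⟨t, 0, 0, t⟩

theorem exists_mul_eq_one_of_isUnit_dets {M : FM R s} (h : IsUnit M.dets) :
    ∃ Z : FM R s, Z * M = 1 := by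
  obtain ⟨v, hv⟩ := h.exists_left_inv
  unfold dets at hv
  -- `v` times the adjugate of `M`
  refine ⟨⟨v * M.d, -(v * M.b), -(v * M.c), v * M.a⟩, ?_⟩
  ext <;> simp only [mul_a, mul_b, mul_c, mul_d, one_a, one_b, one_c, one_d]
  · linear_combination hv
  · ring
  · ring
  · linear_combination hv

theorem dets_mul_scalar_add_one (Y : FM R s) (t : R) :
    (Y * scalar t + 1).dets = t * (Y.a + Y.d + t * Y.dets) + 1 := by
  simp only [dets, scalar, add_a, add_b, add_c, add_d, mul_a, mul_b, mul_c, mul_d,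
    one_a, one_b, one_c, one_d]
  ring

theorem scalar_mem_jacobson_bot {t : R} (ht : t ∈ (⊥ : Ideal R).jacobson) :
    (scalar t : FM R s) ∈ (⊥ : Ideal (FM R s)).jacobson := by
  refine Ideal.mem_jacobson_iff.2 fun Y => ?_
  have hdets : IsUnit (Y * scalar t + 1).dets := by
    rw [dets_mul_scalar_add_one]
    exact Ideal.mem_jacobson_bot.1 ht _
  obtain ⟨Z, hZ⟩ := exists_mul_eq_one_of_isUnit_dets hdets
  refine ⟨Z, ?_⟩
  rw [mul_assoc, ← mul_add_one, hZ, sub_self]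
  exact Submodule.zero_mem _

theorem mul_self_eq_mul_scalar_trace_sub_scalar_dets (A : FM R s) :
    A * A = A * scalar (A.a + A.d) - scalar A.dets := by
  ext <;> simp only [scalar, dets, mul_a, mul_b, mul_c, mul_d, sub_a, sub_b, sub_c, sub_d] <;>
    ring

theorem mul_self_mem_jacobson_bot {A : FM R s}
    (htr : A.a + A.d ∈ (⊥ : Ideal R).jacobson) (hdet : A.dets ∈ (⊥ : Ideal R).jacobson) :
    A * A ∈ (⊥ : Ideal (FM R s)).jacobson := by
  rw [mul_self_eq_mul_scalar_trace_sub_scalar_dets]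
  exact Ideal.sub_mem _ (Ideal.mul_mem_left _ _ (scalar_mem_jacobson_bot htr))
    (scalar_mem_jacobson_bot hdet)

end FM

theorem stmt17 {R : Type*} [CommRing R] (s : R) (A : FM R s)
    (hA : A ∉ (⊥ : Ideal (FM R s)).jacobson)
    (hdet : A.dets ∈ (⊥ : Ideal R).jacobson)
    (htr : A.a + A.d ∈ (⊥ : Ideal R).jacobson) :
    ¬ IsStronglyJClean A := by
  rintro ⟨E, hE, -, hW⟩
  exact hA (hE.mem_jacobson_bot_of_sub_mem hW (FM.mul_self_mem_jacobson_bot htr hdet))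
end
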